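/- arXiv:2308.04540 — 6 statements merged into one kernel-verified Lean document; each statement's English description precedes it below -/
import Mathlib

section
/- Let (X,T) be a compact metric dynamical system with a continuous surjection T, and let μ and ν be two distinct T-invariant ergodic Borel probability measures on X, both with full topological support. Then there exist a dense G_δ set B ⊆ X and a continuous function f : X → ℝ such that for every x ∈ B the ergodic averages A_n(f,x) = (1/n) ∑_{i=0}^{n-1} f(T^i x) do not converge (in fact, lim sup_n A_n(f,x) > 1 and lim inf_n A_n(f,x) < 0). -/
/-!
The limsup of the Birkhoff averages of a bounded function `g` is `T`-invariant. Each average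
has integral `∫ g`, so for `s < ∫ g` it exceeds `s` on a set of measure bounded away from zero,
and a reverse Fatou argument shows that `{limsup ≥ s}` is not null; by ergodicity it is conull.
Thus the averages exceed any `t < ∫ g dρ` infinitely often `ρ`-a.e., and symmetrically for
`t > ∫ g dρ`. As `μ ≠ ν` there is a continuous `f` with `∫ f dμ = 2` and `∫ f dν = -1`. The
points where `A_n f > 3/2` infinitely often, resp. `A_n f < -1/2` infinitely often, form `G_δ`
sets because the averages are continuous, and dense ones because they have full measure for a
measure of full support; by Baire, so is their intersection.
-/

open MeasureTheory Filter Topology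
open scoped ENNReal BoundedContinuousFunction

theorem limsup_eq_limsup_of_tendsto_sub {ι : Type*} {l : Filter ι} [l.NeBot] {u v : ι → ℝ}
    (hv : IsBoundedUnder (· ≤ ·) l v) (hv' : IsBoundedUnder (· ≥ ·) l v)
    (h : Tendsto (u - v) l (𝓝 0)) :
    limsup u l = limsup v l := by
  apply le_antisymm
  · calc limsup u l = limsup (u - v + v) l := by rw [sub_add_cancel]
      _ ≤ limsup (u - v) l + limsup v l :=
          limsup_add_le h.isBoundedUnder_ge h.isBoundedUnder_le hv'.isCoboundedUnder_le hv
      _ = limsup v l := by rw [h.limsup_eq, zero_add]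
  · calc limsup v l = limsup v l + liminf (u - v) l := by rw [h.liminf_eq, add_zero]
      _ ≤ limsup (v + (u - v)) l :=
          le_limsup_add hv hv'.isCoboundedUnder_le h.isBoundedUnder_le h.isBoundedUnder_ge
      _ = limsup u l := by rw [add_sub_cancel]

theorem isGδ_setOf_frequently {X : Type*} [TopologicalSpace X] {p : ℕ → X → Prop}
    (hp : ∀ n, IsOpen {x | p n x}) : IsGδ {x | ∃ᶠ n in atTop, p n x} := by
  have h : {x | ∃ᶠ n in atTop, p n x} = ⋂ N, ⋃ n ≥ N, {x | p n x} := by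
    ext x
    simp [frequently_atTop]
  rw [h]
  exact .iInter_of_isOpen fun N ↦ isOpen_biUnion fun n _ ↦ hp n

section BirkhoffAverage

variable {α : Type*} {f : α → α}

theorem sum_range_iterate_div_eq_birkhoffAverage (g : α → ℝ) (n : ℕ) (x : α) :
    (∑ i ∈ Finset.range n, g (f^[i] x)) / n = birkhoffAverage ℝ f g n x := by
  simp [birkhoffAverage, birkhoffSum, div_eq_inv_mul]

theorem norm_birkhoffAverage_le (𝕜 : Type*) [RCLike 𝕜] {E : Type*} [SeminormedAddCommGroup E]
    [NormedSpace 𝕜 E] {g : α → E} {C : ℝ} (hg : ∀ y, ‖g y‖ ≤ C) (n : ℕ) (x : α) :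
    ‖birkhoffAverage 𝕜 f g n x‖ ≤ C := by
  rcases Nat.eq_zero_or_pos n with rfl | hn
  · simpa using (norm_nonneg _).trans (hg x)
  rw [birkhoffAverage, norm_smul, norm_inv, RCLike.norm_natCast, inv_mul_le_iff₀ (by positivity)]
  calc ‖birkhoffSum f g n x‖ ≤ ∑ k ∈ Finset.range n, ‖g (f^[k] x)‖ := norm_sum_le _ _
    _ ≤ ∑ _k ∈ Finset.range n, C := Finset.sum_le_sum fun k _ ↦ hg _
    _ = n * C := by simp

theorem isBoundedUnder_le_birkhoffAverage {g : α → ℝ} {C : ℝ} (hg : ∀ y, ‖g y‖ ≤ C)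
    (l : Filter ℕ) (x : α) : IsBoundedUnder (· ≤ ·) l fun n ↦ birkhoffAverage ℝ f g n x :=
  isBoundedUnder_of ⟨C, fun n ↦ le_of_abs_le (norm_birkhoffAverage_le ℝ hg n x)⟩

theorem isBoundedUnder_ge_birkhoffAverage {g : α → ℝ} {C : ℝ} (hg : ∀ y, ‖g y‖ ≤ C)
    (l : Filter ℕ) (x : α) : IsBoundedUnder (· ≥ ·) l fun n ↦ birkhoffAverage ℝ f g n x :=
  isBoundedUnder_of ⟨-C, fun n ↦ neg_le_of_abs_le (norm_birkhoffAverage_le ℝ hg n x)⟩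

theorem limsup_birkhoffAverage_apply {g : α → ℝ} {C : ℝ} (hg : ∀ y, ‖g y‖ ≤ C) (x : α) :
    limsup (fun n ↦ birkhoffAverage ℝ f g n (f x)) atTop =
      limsup (fun n ↦ birkhoffAverage ℝ f g n x) atTop := by
  refine limsup_eq_limsup_of_tendsto_sub (isBoundedUnder_le_birkhoffAverage hg _ x)
    (isBoundedUnder_ge_birkhoffAverage hg _ x) ?_
  refine tendsto_birkhoffAverage_apply_sub_birkhoffAverage' ℝ ?_ f x
  exact isBounded_iff_forall_norm_le.2 ⟨C, by rintro _ ⟨y, rfl⟩; exact hg y⟩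

theorem Measurable.birkhoffAverage [MeasurableSpace α] (R : Type*) {M : Type*} [DivisionSemiring R]
    [AddCommMonoid M] [Module R M] [MeasurableSpace M] [MeasurableAdd₂ M]
    [MeasurableConstSMul R M] (hf : Measurable f) {g : α → M} (hg : Measurable g) (n : ℕ) :
    Measurable (birkhoffAverage R f g n) :=
  (Finset.measurable_sum _ fun k _ ↦ hg.comp (hf.iterate k)).const_smul _

theorem Continuous.birkhoffAverage [TopologicalSpace α] (R : Type*) {M : Type*} [DivisionSemiring R]
    [AddCommMonoid M] [Module R M] [TopologicalSpace M] [ContinuousAdd M]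
    [ContinuousConstSMul R M] (hf : Continuous f) {g : α → M} (hg : Continuous g) (n : ℕ) :
    Continuous (birkhoffAverage R f g n) :=
  (continuous_finsetSum _ fun k _ ↦ hg.comp (hf.iterate k)).const_smul _

end BirkhoffAverage

namespace MeasureTheory

variable {X : Type*} [MeasurableSpace X] {ρ : Measure X}

theorem le_measure_limsup_atTop [IsFiniteMeasure ρ] {s : ℕ → Set X}
    (hs : ∀ n, MeasurableSet (s n)) {ε : ℝ≥0∞} (hε : ∀ᶠ n in atTop, ε ≤ ρ (s n)) :
    ε ≤ ρ (limsup s atTop) := by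
  obtain ⟨N₀, hN₀⟩ := eventually_atTop.1 hε
  have htail : ∀ N, ε ≤ ρ (⋃ n ≥ N, s n) := fun N ↦
    (hN₀ _ (le_max_right N N₀)).trans (measure_mono (Set.subset_biUnion_of_mem (le_max_left N N₀)))
  have hanti : Antitone fun N ↦ ⋃ n ≥ N, s n := fun a b hab ↦
    Set.biUnion_mono (fun n (hn : b ≤ n) ↦ hab.trans hn) fun _ _ ↦ le_rfl
  rw [limsup_eq_iInf_iSup_of_nat]
  exact ge_of_tendsto (tendsto_measure_iInter_atTop
    (fun N ↦ (MeasurableSet.biUnion (Set.to_countable _) fun n _ ↦ hs n).nullMeasurableSet) hanti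
    ⟨0, measure_ne_top _ _⟩) (Eventually.of_forall htail)

theorem integral_le_add_mul_measureReal_lt [IsProbabilityMeasure ρ] {h : X → ℝ}
    (hm : Measurable h) (hh : Integrable h ρ) {M : ℝ} (hM : ∀ x, h x ≤ M) (s : ℝ) :
    ∫ x, h x ∂ρ ≤ s + (M - s) * ρ.real {x | s < h x} := by
  have hmeas : MeasurableSet {x | s < h x} := measurableSet_lt measurable_const hm
  have hle : ∀ x, h x ≤ s + {x | s < h x}.indicator (fun _ ↦ M - s) x := by
    intro x
    by_cases hx : s < h x
    · simp [Set.indicator_of_mem (show x ∈ {x | s < h x} from hx), hM x]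
    · rw [Set.indicator_of_notMem (show x ∉ {x | s < h x} from hx)]
      linarith [not_lt.1 hx]
  calc ∫ x, h x ∂ρ ≤ ∫ x, (s + {x | s < h x}.indicator (fun _ ↦ M - s) x) ∂ρ :=
        integral_mono hh ((integrable_const s).add ((integrable_const _).indicator hmeas)) hle
    _ = s + (M - s) * ρ.real {x | s < h x} := by
        rw [integral_add (integrable_const s) ((integrable_const _).indicator hmeas),
          integral_const, integral_indicator_const _ hmeas]
        simp [mul_comm]

theorem MeasurePreserving.integral_birkhoffAverage {T : X → X} (hT : MeasurePreserving T ρ ρ)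
    {g : X → ℝ} (hg : Integrable g ρ) {n : ℕ} (hn : n ≠ 0) :
    ∫ x, birkhoffAverage ℝ T g n x ∂ρ = ∫ x, g x ∂ρ := by
  have hcomp : ∀ k, ∫ x, g (T^[k] x) ∂ρ = ∫ x, g x ∂ρ := fun k ↦ by
    have hgk : AEStronglyMeasurable g (ρ.map T^[k]) := by
      rw [(hT.iterate k).map_eq]; exact hg.1
    rw [← integral_map (hT.iterate k).aemeasurable hgk, (hT.iterate k).map_eq]
  simp only [birkhoffAverage, birkhoffSum, smul_eq_mul]
  rw [integral_const_mul, integral_finsetSum (f := fun k x ↦ g (T^[k] x)) _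
    fun k _ ↦ (hT.iterate k).integrable_comp_of_integrable hg]
  simp [hcomp, hn]

variable [IsProbabilityMeasure ρ] {T : X → X} {g : X → ℝ} {C : ℝ}

theorem MeasurePreserving.measure_limsup_setOf_lt_birkhoffAverage_ne_zero
    (hT : MeasurePreserving T ρ ρ) (hgm : Measurable g) (hgC : ∀ x, ‖g x‖ ≤ C) {s : ℝ}
    (hs : s < ∫ x, g x ∂ρ) :
    ρ (limsup (fun n ↦ {x | s < birkhoffAverage ℝ T g n x}) atTop) ≠ 0 := by
  have hAm := Measurable.birkhoffAverage ℝ hT.measurable hgm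
  have hA := norm_birkhoffAverage_le ℝ (f := T) hgC
  have hint : Integrable g ρ :=
    .of_bound hgm.aestronglyMeasurable C (Eventually.of_forall hgC)
  have hmarkov : ∀ n ≠ 0,
      ∫ x, g x ∂ρ - s ≤ (C - s) * ρ.real {x | s < birkhoffAverage ℝ T g n x} := by
    intro n hn
    have := integral_le_add_mul_measureReal_lt (ρ := ρ) (hAm n)
      (.of_bound (hAm n).aestronglyMeasurable C (Eventually.of_forall (hA n)))
      (fun x ↦ le_of_abs_le (hA n x)) s
    rw [hT.integral_birkhoffAverage hint hn] at this
    linarith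
  have hCs : 0 < C - s := by
    have := hmarkov 1 one_ne_zero
    nlinarith [measureReal_nonneg (μ := ρ) (s := {x | s < birkhoffAverage ℝ T g 1 x})]
  have hε : 0 < ENNReal.ofReal ((∫ x, g x ∂ρ - s) / (C - s)) :=
    ENNReal.ofReal_pos.2 (div_pos (sub_pos.2 hs) hCs)
  refine (hε.trans_le (le_measure_limsup_atTop
    (fun n ↦ measurableSet_lt measurable_const (hAm n)) ?_)).ne'
  filter_upwards [eventually_ne_atTop 0] with n hn
  exact ENNReal.ofReal_le_of_le_toReal ((div_le_iff₀' hCs).2 (hmarkov n hn))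

theorem Ergodic.ae_frequently_lt_birkhoffAverage (hT : Ergodic T ρ) (hgm : Measurable g)
    (hgC : ∀ x, ‖g x‖ ≤ C) {t : ℝ} (ht : t < ∫ x, g x ∂ρ) :
    ∀ᵐ x ∂ρ, ∃ᶠ n in atTop, t < birkhoffAverage ℝ T g n x := by
  obtain ⟨s, hts, hs⟩ := exists_between ht
  set S := {x | s ≤ limsup (fun n ↦ birkhoffAverage ℝ T g n x) atTop}
  have hSm : MeasurableSet S :=
    measurableSet_le measurable_const (.limsup (Measurable.birkhoffAverage ℝ hT.measurable hgm))
  have hSinv : T ⁻¹' S = S := by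
    ext x
    simp [S, limsup_birkhoffAverage_apply hgC]
  have hlimsup_sub : limsup (fun n ↦ {x | s < birkhoffAverage ℝ T g n x}) atTop ⊆ S := by
    intro x hx
    rw [mem_limsup_iff_frequently_mem] at hx
    exact le_limsup_of_frequently_le (hx.mono fun n hn ↦ le_of_lt hn)
      (isBoundedUnder_le_birkhoffAverage hgC _ x)
  have hSpos : ρ S ≠ 0 := fun h ↦
    hT.toMeasurePreserving.measure_limsup_setOf_lt_birkhoffAverage_ne_zero hgm hgC hs
      (measure_mono_null hlimsup_sub h)
  have hSae : ∀ᵐ x ∂ρ, x ∈ S := by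
    rw [ae_iff, ← Set.compl_def, prob_compl_eq_zero_iff hSm]
    exact (hT.prob_eq_zero_or_one hSm hSinv).resolve_left hSpos
  filter_upwards [hSae] with x hx
  exact frequently_lt_of_lt_limsup
    (isBoundedUnder_ge_birkhoffAverage hgC _ x).isCoboundedUnder_le
    (hts.trans_le hx)

theorem Ergodic.ae_frequently_birkhoffAverage_lt (hT : Ergodic T ρ) (hgm : Measurable g)
    (hgC : ∀ x, ‖g x‖ ≤ C) {t : ℝ} (ht : ∫ x, g x ∂ρ < t) :
    ∀ᵐ x ∂ρ, ∃ᶠ n in atTop, birkhoffAverage ℝ T g n x < t := by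
  have hneg := hT.ae_frequently_lt_birkhoffAverage (g := -g) hgm.neg (by simpa using hgC)
    (t := -t) (by simpa [integral_neg] using ht)
  filter_upwards [hneg] with x hx
  exact hx.mono fun n hn ↦ by simpa [birkhoffAverage_neg] using hn

theorem exists_continuousMap_integral_eq_of_ne {X : Type*} [TopologicalSpace X]
    [HasOuterApproxClosed X] [MeasurableSpace X] [BorelSpace X] {μ ν : Measure X}
    [IsProbabilityMeasure μ] [IsProbabilityMeasure ν] (hμν : μ ≠ ν) (a b : ℝ) :
    ∃ f : C(X, ℝ), ∫ x, f x ∂μ = a ∧ ∫ x, f x ∂ν = b := by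
  obtain ⟨g, hg⟩ : ∃ g : X →ᵇ ℝ, ∫ x, g x ∂μ ≠ ∫ x, g x ∂ν := by
    by_contra! h
    exact hμν (ext_of_forall_integral_eq_of_IsFiniteMeasure h)
  set c := (a - b) / (∫ x, g x ∂μ - ∫ x, g x ∂ν)
  have hc : c * (∫ x, g x ∂μ - ∫ x, g x ∂ν) = a - b := div_mul_cancel₀ _ (sub_ne_zero.2 hg)
  have hint : ∀ ρ : Measure X, [IsProbabilityMeasure ρ] →
      ∫ x, (c * g x + (a - c * ∫ x, g x ∂μ)) ∂ρ = c * ∫ x, g x ∂ρ + (a - c * ∫ x, g x ∂μ) := by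
    intro ρ _
    rw [integral_add ((g.integrable ρ).const_mul c) (integrable_const _), integral_const_mul]
    simp
  refine ⟨⟨fun x ↦ c * g x + (a - c * ∫ x, g x ∂μ), by fun_prop⟩, ?_, ?_⟩
  · simp only [ContinuousMap.coe_mk, hint]
    ring
  · simp only [ContinuousMap.coe_mk, hint]
    linarith

end MeasureTheory

theorem stmt0_general {X : Type*} [MetricSpace X] [CompactSpace X] [MeasurableSpace X] [BorelSpace X]
    (T : X → X) (hTc : Continuous T)
    (μ ν : Measure X) [IsProbabilityMeasure μ] [IsProbabilityMeasure ν]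
    (hμ : Ergodic T μ) (hν : Ergodic T ν) (hμν : μ ≠ ν)
    [μ.IsOpenPosMeasure] [ν.IsOpenPosMeasure] :
    ∃ (B : Set X) (f : C(X, ℝ)), IsGδ B ∧ Dense B ∧
      ∀ x ∈ B,
        1 < Filter.limsup (fun n : ℕ => (∑ i ∈ Finset.range n, f (T^[i] x)) / (n : ℝ)) atTop ∧
        Filter.liminf (fun n : ℕ => (∑ i ∈ Finset.range n, f (T^[i] x)) / (n : ℝ)) atTop < 0 := by
  obtain ⟨f, hfμ, hfν⟩ := exists_continuousMap_integral_eq_of_ne hμν 2 (-1)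
  have hfC : ∀ x, ‖f x‖ ≤ ‖f‖ := f.norm_coe_le_norm
  have hAc := Continuous.birkhoffAverage ℝ hTc f.continuous
  have hup : ∀ᵐ x ∂μ, ∃ᶠ n in atTop, 3 / 2 < birkhoffAverage ℝ T f n x :=
    hμ.ae_frequently_lt_birkhoffAverage f.continuous.measurable hfC (by rw [hfμ]; norm_num)
  have hdown : ∀ᵐ x ∂ν, ∃ᶠ n in atTop, birkhoffAverage ℝ T f n x < -1 / 2 :=
    hν.ae_frequently_birkhoffAverage_lt f.continuous.measurable hfC (by rw [hfν]; norm_num)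
  have hupGδ : IsGδ {x | ∃ᶠ n in atTop, 3 / 2 < birkhoffAverage ℝ T f n x} :=
    isGδ_setOf_frequently fun n ↦ isOpen_lt continuous_const (hAc n)
  have hdownGδ : IsGδ {x | ∃ᶠ n in atTop, birkhoffAverage ℝ T f n x < -1 / 2} :=
    isGδ_setOf_frequently fun n ↦ isOpen_lt (hAc n) continuous_const
  refine ⟨_, f, hupGδ.inter hdownGδ, (Measure.dense_of_ae hup).inter_of_Gδ hupGδ hdownGδ
    (Measure.dense_of_ae hdown), fun x ⟨hxup, hxdown⟩ ↦ ?_⟩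
  simp only [sum_range_iterate_div_eq_birkhoffAverage]
  constructor
  · calc (1 : ℝ) < 3 / 2 := by norm_num
      _ ≤ _ := le_limsup_of_frequently_le (hxup.mono fun _ ↦ le_of_lt)
          (isBoundedUnder_le_birkhoffAverage hfC _ x)
  · calc _ ≤ (-1 / 2 : ℝ) := liminf_le_of_frequently_le (hxdown.mono fun _ ↦ le_of_lt)
          (isBoundedUnder_ge_birkhoffAverage hfC _ x)
      _ < 0 := by norm_num

theorem stmt0 {X : Type*} [MetricSpace X] [CompactSpace X] [MeasurableSpace X] [BorelSpace X]
    (T : X → X) (hTc : Continuous T) (hTs : Function.Surjective T)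
    (μ ν : Measure X) [IsProbabilityMeasure μ] [IsProbabilityMeasure ν]
    (hμ : Ergodic T μ) (hν : Ergodic T ν) (hμν : μ ≠ ν)
    [μ.IsOpenPosMeasure] [ν.IsOpenPosMeasure] :
    ∃ (B : Set X) (f : C(X, ℝ)), IsGδ B ∧ Dense B ∧
      ∀ x ∈ B,
        1 < Filter.limsup (fun n : ℕ => (∑ i ∈ Finset.range n, f (T^[i] x)) / (n : ℝ)) atTop ∧
        Filter.liminf (fun n : ℕ => (∑ i ∈ Finset.range n, f (T^[i] x)) / (n : ℝ)) atTop < 0 :=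
  stmt0_general T hTc μ ν hμ hν hμν
end

section
/- Let M be a nonempty compact convex subset of a locally convex metric space whose metric d is convex, and let T : M → M be a continuous affine map. Then the set M_T of T-fixed points is nonempty, and for every ε > 0 there exists n_ε such that for all ν ∈ M and all n ≥ n_ε, d((1/n) ∑_{i=0}^{n-1} T^i(ν), M_T) < ε. -/
/-!
Write `A n ν` for the Cesàro average `(1/n) ∑_{i<n} T^i ν`. Because the graph of `T` over `M`
is convex, `T` commutes with finite convex combinations, so `A n ν ∈ M` and
`T (A n ν) = A n (T ν)`. The two averages differ only in one term: `ν` against `T^n ν`.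
Jensen's inequality for the convex function `d` on `E × E` then gives
`d(A n ν, T (A n ν)) ≤ diam M / n`, uniformly in `ν`. The continuous function `x ↦ d(x, T x)`
therefore has minimum `0` on the compact set `M`, which gives a fixed point. By compactness,
points of `M` where this function is small enough are `ε`-close to `M_T`.
-/

open Filter Finset

section AffineOn

variable {𝕜 E : Type*} [Field 𝕜] [LinearOrder 𝕜] [IsStrictOrderedRing 𝕜] [AddCommGroup E]
  [Module 𝕜 E] {M : Set E}

lemma Convex.graphOn {F : Type*} [AddCommGroup F] [Module 𝕜 F] {T : E → F} (hM : Convex 𝕜 M)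
    (hT : ∀ t ∈ Set.Icc (0:𝕜) 1, ∀ a ∈ M, ∀ b ∈ M,
      T (t • a + (1 - t) • b) = t • T a + (1 - t) • T b) :
    Convex 𝕜 (M.graphOn T) := by
  rintro _ ⟨x, hx, rfl⟩ _ ⟨y, hy, rfl⟩ s t hs ht hst
  obtain rfl : t = 1 - s := eq_sub_of_add_eq' hst
  exact ⟨s • x + (1 - s) • y, hM hx hy hs ht hst,
    Prod.ext rfl (hT s ⟨hs, sub_nonneg.1 ht⟩ x hx y hy)⟩

lemma map_sum_smul_of_affineOn {F : Type*} [AddCommGroup F] [Module 𝕜 F] {T : E → F}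
    (hM : Convex 𝕜 M)
    (hT : ∀ t ∈ Set.Icc (0:𝕜) 1, ∀ a ∈ M, ∀ b ∈ M,
      T (t • a + (1 - t) • b) = t • T a + (1 - t) • T b)
    {ι : Type*} {s : Finset ι} {w : ι → 𝕜} {a : ι → E} (hw₀ : ∀ i ∈ s, 0 ≤ w i)
    (hw₁ : ∑ i ∈ s, w i = 1) (ha : ∀ i ∈ s, a i ∈ M) :
    T (∑ i ∈ s, w i • a i) = ∑ i ∈ s, w i • T (a i) := by
  obtain ⟨x, -, hx⟩ := (hM.graphOn hT).sum_mem hw₀ hw₁ (z := fun i => (a i, T (a i)))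
    fun i hi => ⟨a i, ha i hi, rfl⟩
  simp only [Prod.ext_iff, Prod.fst_sum, Prod.snd_sum, Prod.smul_fst, Prod.smul_snd] at hx
  rw [← hx.1, hx.2]

lemma birkhoffAverage_mem {T : E → E} (hM : Convex 𝕜 M) (hTM : Set.MapsTo T M M) {ν : E}
    (hν : ν ∈ M) {n : ℕ} (hn : n ≠ 0) : birkhoffAverage 𝕜 T id n ν ∈ M := by
  rw [birkhoffAverage, birkhoffSum, smul_sum]
  exact hM.sum_mem (fun _ _ => by positivity) (by simp [hn]) fun i _ => hTM.iterate i hν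

lemma map_birkhoffAverage_of_affineOn {T : E → E} (hM : Convex 𝕜 M) (hTM : Set.MapsTo T M M)
    (hT : ∀ t ∈ Set.Icc (0:𝕜) 1, ∀ a ∈ M, ∀ b ∈ M,
      T (t • a + (1 - t) • b) = t • T a + (1 - t) • T b)
    {ν : E} (hν : ν ∈ M) {n : ℕ} (hn : n ≠ 0) :
    T (birkhoffAverage 𝕜 T id n ν) = birkhoffAverage 𝕜 T id n (T ν) := by
  simp only [birkhoffAverage, birkhoffSum, smul_sum, id]
  rw [map_sum_smul_of_affineOn hM hT (fun _ _ => by positivity) (by simp [hn])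
    fun i _ => hTM.iterate i hν]
  simp only [← Function.iterate_succ_apply', Function.iterate_succ_apply]

end AffineOn

section ConvexMetric

variable {E : Type*} [AddCommGroup E] [Module ℝ E] [MetricSpace E]

lemma dist_sum_smul_le_of_convexOn (hd : ConvexOn ℝ Set.univ fun p : E × E => dist p.1 p.2)
    {ι : Type*} {s : Finset ι} {w : ι → ℝ} (hw₀ : ∀ i ∈ s, 0 ≤ w i)
    (hw₁ : ∑ i ∈ s, w i = 1) (a b : ι → E) :
    dist (∑ i ∈ s, w i • a i) (∑ i ∈ s, w i • b i) ≤ ∑ i ∈ s, w i * dist (a i) (b i) := by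
  simpa only [Prod.fst_sum, Prod.snd_sum, Prod.smul_fst, Prod.smul_snd, smul_eq_mul] using
    hd.map_sum_le hw₀ hw₁ (p := fun i => (a i, b i)) fun i _ => Set.mem_univ _

lemma dist_birkhoffAverage_birkhoffAverage_apply_le
    (hd : ConvexOn ℝ Set.univ fun p : E × E => dist p.1 p.2) (T : E → E) (n : ℕ) (ν : E) :
    dist (birkhoffAverage ℝ T id n ν) (birkhoffAverage ℝ T id n (T ν))
      ≤ (n : ℝ)⁻¹ * dist ν (T^[n] ν) := by
  rcases eq_or_ne n 0 with rfl | hn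
  · simp
  -- The sum along the orbit of `T ν` is the one along the orbit of `ν` with its first term
  -- `ν` replaced by `T^[n] ν`.
  set b : ℕ → E := Function.update (fun i => T^[i] ν) 0 (T^[n] ν)
  have hb : birkhoffSum T id n (T ν) = ∑ i ∈ range n, b i := by
    obtain ⟨m, rfl⟩ := Nat.exists_eq_add_one_of_ne_zero hn
    rw [sum_range_succ', birkhoffSum_succ]
    simp only [b, Function.update_self, Function.update_of_ne (Nat.succ_ne_zero _), birkhoffSum,
      id, Function.iterate_succ_apply]
  calc dist (birkhoffAverage ℝ T id n ν) (birkhoffAverage ℝ T id n (T ν))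
      = dist (∑ i ∈ range n, (n : ℝ)⁻¹ • T^[i] ν) (∑ i ∈ range n, (n : ℝ)⁻¹ • b i) := by
        rw [birkhoffAverage, birkhoffAverage, hb, birkhoffSum, smul_sum, smul_sum]
        rfl
    _ ≤ ∑ i ∈ range n, (n : ℝ)⁻¹ * dist (T^[i] ν) (b i) :=
        dist_sum_smul_le_of_convexOn hd (fun _ _ => by positivity) (by simp [hn]) _ _
    _ = (n : ℝ)⁻¹ * dist ν (T^[n] ν) := by
        rw [← mul_sum, sum_eq_single_of_mem 0 (mem_range.2 (Nat.pos_of_ne_zero hn))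
          fun i _ hi => by simp [b, hi]]
        simp [b]

lemma dist_birkhoffAverage_map_le_diam_div
    (hd : ConvexOn ℝ Set.univ fun p : E × E => dist p.1 p.2) {M : Set E} {T : E → E}
    (hM : Convex ℝ M) (hMb : Bornology.IsBounded M) (hTM : Set.MapsTo T M M)
    (hT : ∀ t ∈ Set.Icc (0:ℝ) 1, ∀ a ∈ M, ∀ b ∈ M,
      T (t • a + (1 - t) • b) = t • T a + (1 - t) • T b)
    {ν : E} (hν : ν ∈ M) {n : ℕ} (hn : n ≠ 0) :
    dist (birkhoffAverage ℝ T id n ν) (T (birkhoffAverage ℝ T id n ν)) ≤ Metric.diam M / n := by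
  rw [map_birkhoffAverage_of_affineOn hM hTM hT hν hn, div_eq_inv_mul]
  exact (dist_birkhoffAverage_birkhoffAverage_apply_le hd T n ν).trans <|
    mul_le_mul_of_nonneg_left (Metric.dist_le_diam_of_mem hMb hν (hTM.iterate n hν))
      (by positivity)

end ConvexMetric

lemma IsCompact.exists_pos_forall_lt_imp_mem {X : Type*} [TopologicalSpace X] {K U : Set X}
    {g : X → ℝ} (hK : IsCompact K) (hg : ContinuousOn g K) (hU : IsOpen U)
    (hzero : ∀ x ∈ K, g x ≤ 0 → x ∈ U) : ∃ δ > 0, ∀ x ∈ K, g x < δ → x ∈ U := by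
  rcases (K \ U).eq_empty_or_nonempty with hempty | hne
  · exact ⟨1, one_pos, fun x hx _ => by simpa using Set.sdiff_eq_empty.1 hempty hx⟩
  obtain ⟨x₀, ⟨hx₀K, hx₀U⟩, hmin⟩ :=
    (hK.diff hU).exists_isMinOn hne (hg.mono Set.sdiff_subset)
  refine ⟨g x₀, not_le.1 fun h => hx₀U (hzero x₀ hx₀K h), fun x hx hlt => ?_⟩
  by_contra hxU
  exact (hmin ⟨hx, hxU⟩).not_gt hlt

theorem stmt2_general {E : Type*} [AddCommGroup E] [Module ℝ E] [MetricSpace E]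
    (hconvd : ∀ t ∈ Set.Icc (0:ℝ) 1, ∀ a b c d : E,
      dist (t • a + (1 - t) • b) (t • c + (1 - t) • d) ≤ t * dist a c + (1 - t) * dist b d)
    (M : Set E) (hMne : M.Nonempty) (hMc : IsCompact M) (hMconv : Convex ℝ M)
    (T : E → E) (hTm : Set.MapsTo T M M) (hTc : ContinuousOn T M)
    (hTaff : ∀ t ∈ Set.Icc (0:ℝ) 1, ∀ a ∈ M, ∀ b ∈ M,
      T (t • a + (1 - t) • b) = t • T a + (1 - t) • T b) :
    {x ∈ M | T x = x}.Nonempty ∧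
      ∀ ε > 0, ∃ n₀ : ℕ, ∀ ν ∈ M, ∀ n ≥ n₀,
        Metric.infDist ((n : ℝ)⁻¹ • ∑ i ∈ Finset.range n, T^[i] ν) {x ∈ M | T x = x} < ε := by
  have hd : ConvexOn ℝ Set.univ fun p : E × E => dist p.1 p.2 :=
    ⟨convex_univ, fun p _ q _ s t hs ht hst => by
      obtain rfl : t = 1 - s := eq_sub_of_add_eq' hst
      exact hconvd s ⟨hs, sub_nonneg.1 ht⟩ _ _ _ _⟩
  have hA : ∀ ν ∈ M, ∀ n ≠ 0, birkhoffAverage ℝ T id n ν ∈ M ∧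
      dist (birkhoffAverage ℝ T id n ν) (T (birkhoffAverage ℝ T id n ν)) ≤ Metric.diam M / n :=
    fun ν hν n hn => ⟨birkhoffAverage_mem hMconv hTm hν hn,
      dist_birkhoffAverage_map_le_diam_div hd hMconv hMc.isBounded hTm hTaff hν hn⟩
  have hg : ContinuousOn (fun x => dist x (T x)) M :=
    continuous_dist.comp_continuousOn (continuousOn_id.prodMk hTc)
  have hD := tendsto_const_div_atTop_nhds_zero_nat (Metric.diam M)
  obtain ⟨x₀, hx₀, hmin⟩ := hMc.exists_isMinOn hMne hg
  have hx₀fix : dist x₀ (T x₀) ≤ 0 := ge_of_tendsto hD <| (eventually_ne_atTop 0).mono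
    fun n hn => (hmin (hA x₀ hx₀ n hn).1).trans (hA x₀ hx₀ n hn).2
  refine ⟨⟨x₀, hx₀, (dist_le_zero.1 hx₀fix).symm⟩, fun ε hε => ?_⟩
  obtain ⟨δ, hδ, hclose⟩ := hMc.exists_pos_forall_lt_imp_mem hg
    (U := {x | Metric.infDist x {x ∈ M | T x = x} < ε})
    (isOpen_lt (Metric.continuous_infDist_pt _) continuous_const) fun x hx h0 => by
      have hxF : x ∈ {x ∈ M | T x = x} := ⟨hx, (dist_le_zero.1 h0).symm⟩
      rwa [Set.mem_ofPred_eq, Metric.infDist_zero_of_mem hxF]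
  obtain ⟨n₀, hn₀⟩ :=
    eventually_atTop.1 ((eventually_ne_atTop 0).and (hD.eventually (gt_mem_nhds hδ)))
  refine ⟨n₀, fun ν hν n hn => ?_⟩
  obtain ⟨hn0, hnδ⟩ := hn₀ n hn
  exact hclose _ (hA ν hν n hn0).1 ((hA ν hν n hn0).2.trans_lt hnδ)

theorem stmt2 {E : Type*} [AddCommGroup E] [Module ℝ E] [MetricSpace E]
    [IsTopologicalAddGroup E] [ContinuousSMul ℝ E] [LocallyConvexSpace ℝ E]
    (hconvd : ∀ t ∈ Set.Icc (0:ℝ) 1, ∀ a b c d : E,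
      dist (t • a + (1 - t) • b) (t • c + (1 - t) • d) ≤ t * dist a c + (1 - t) * dist b d)
    (M : Set E) (hMne : M.Nonempty) (hMc : IsCompact M) (hMconv : Convex ℝ M)
    (T : E → E) (hTm : Set.MapsTo T M M) (hTc : ContinuousOn T M)
    (hTaff : ∀ t ∈ Set.Icc (0:ℝ) 1, ∀ a ∈ M, ∀ b ∈ M,
      T (t • a + (1 - t) • b) = t • T a + (1 - t) • T b) :
    {x ∈ M | T x = x}.Nonempty ∧
      ∀ ε > 0, ∃ n₀ : ℕ, ∀ ν ∈ M, ∀ n ≥ n₀,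
        Metric.infDist ((n : ℝ)⁻¹ • ∑ i ∈ Finset.range n, T^[i] ν) {x ∈ M | T x = x} < ε :=
  stmt2_general hconvd M hMne hMc hMconv T hTm hTc hTaff
end

section
/- Let M be a compact convex metrizable subset of a locally convex topological vector space and let μ be an extreme point of M. Then for every ε > 0 there exists δ > 0 such that whenever ξ is a Borel probability measure on M with d(bar(ξ), μ) < δ, one has ξ{ ν ∈ M : d(μ,ν) < ε } > 1 − ε. -/
/-!
The points of `M` at distance `≥ ε` from `μ` form a compact set `F` missing `μ`, so by
Hahn–Banach `F` is covered by finitely many open half-spaces `{L_i > c_i}`, `i ≤ k`, with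
`L_i μ < c_i`. If `ξ F ≥ ε`, one piece `D = F ∩ {L_i > c_i}` has mass `t ≥ ε / k`, and splitting
`ξ` along `D` writes `bar ξ = t p + (1 - t) q` with `p ∈ M ∩ {L_i ≥ c_i}` the barycenter of `ξ|_D`
and `q ∈ M`. Since `μ` is extreme and `L_i μ < c_i`, the compact set of all such combinations
misses `μ`, hence stays at some positive distance `δ` from it.
-/

open MeasureTheory Set

section Barycenter

variable {E : Type*} [TopologicalSpace E] [T2Space E] [MeasurableSpace E] [OpensMeasurableSpace E]
  {C : Set E} {η : Measure E} [IsFiniteMeasure η]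

theorem integrable_of_ae_mem_of_continuousOn {F : Type*} [NormedAddCommGroup F]
    {f : E → F} (hC : IsCompact C) (hη : ∀ᵐ x ∂η, x ∈ C) (hf : ContinuousOn f C) :
    Integrable f η := by
  simpa [IntegrableOn, Measure.restrict_eq_self_of_ae_mem hη]
    using hf.integrableOn_compact (μ := η) hC

variable [AddCommGroup E] [Module ℝ E]

theorem exists_mem_forall_mem_finset_integral_eq (hC : IsCompact C) (hCconv : Convex ℝ C)
    (hCne : C.Nonempty) (hη : ∀ᵐ x ∂η, x ∈ C) (s : Finset (StrongDual ℝ E)) :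
    ∃ p ∈ C, ∀ L ∈ s, ∫ x, L x ∂η = η.real univ * L p := by
  rcases eq_zero_or_neZero η with rfl | _
  · obtain ⟨p, hp⟩ := hCne
    exact ⟨p, hp, fun L _ => by simp⟩
  let Φ : E →ₗ[ℝ] (s → ℝ) := LinearMap.pi fun L => (L : StrongDual ℝ E).toLinearMap
  have hΦ : Continuous Φ := continuous_pi fun L => (L : StrongDual ℝ E).continuous
  have hΦint : ∀ L : s, Integrable (fun x => Φ x L) η := fun L =>
    integrable_of_ae_mem_of_continuousOn hC hη (L : StrongDual ℝ E).continuous.continuousOn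
  obtain ⟨p, hp, hpavg⟩ : ⨍ x, Φ x ∂η ∈ Φ '' C :=
    (hCconv.linear_image Φ).average_mem (hC.image hΦ).isClosed
      (hη.mono fun x hx => ⟨x, hx, rfl⟩)
      (integrable_of_ae_mem_of_continuousOn hC hη hΦ.continuousOn)
  refine ⟨p, hp, fun L hL => ?_⟩
  have hLp : L p = (η.real univ)⁻¹ * ∫ x, Φ x ⟨L, hL⟩ ∂η := by
    rw [← smul_eq_mul, ← eval_integral hΦint, ← Pi.smul_apply, ← average_eq, ← hpavg]
    rfl
  rw [hLp, mul_inv_cancel_left₀ measureReal_univ_ne_zero]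
  rfl

theorem exists_mem_forall_integral_eq (hC : IsCompact C) (hCconv : Convex ℝ C)
    (hCne : C.Nonempty) (hη : ∀ᵐ x ∂η, x ∈ C) :
    ∃ p ∈ C, ∀ L : StrongDual ℝ E, ∫ x, L x ∂η = η.real univ * L p := by
  obtain ⟨p, hp, hpL⟩ := hC.inter_iInter_nonempty
    (fun L : StrongDual ℝ E => {p | ∫ x, L x ∂η = η.real univ * L p})
    (fun L => isClosed_eq continuous_const (continuous_const.mul L.continuous)) fun s => by
      obtain ⟨p, hp, hps⟩ := exists_mem_forall_mem_finset_integral_eq hC hCconv hCne hη s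
      exact ⟨p, hp, mem_iInter₂.2 hps⟩
  exact ⟨p, hp, mem_iInter.1 hpL⟩

end Barycenter

section Mixtures

variable {E : Type*} [AddCommGroup E] [Module ℝ E]

def mixtures (t₀ : ℝ) (K M : Set E) : Set E :=
  (fun x : ℝ × E × E => x.1 • x.2.1 + (1 - x.1) • x.2.2) '' Icc t₀ 1 ×ˢ K ×ˢ M

theorem notMem_mixtures_of_mem_extremePoints {K M : Set E} {μ : E} {t₀ : ℝ}
    (hμ : μ ∈ M.extremePoints ℝ) (hKM : K ⊆ M) (hμK : μ ∉ K) (ht₀ : 0 < t₀) :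
    μ ∉ mixtures t₀ K M := by
  rintro ⟨⟨t, p, q⟩, ⟨⟨ht₀t, ht1⟩, hp, hq⟩, hμpq⟩
  rcases ht1.eq_or_lt with rfl | ht1
  · simp only [one_smul, sub_self, zero_smul, add_zero] at hμpq
    exact hμK (hμpq ▸ hp)
  · exact hμK (hμ.2 (hKM hp) hq ⟨t, 1 - t, ht₀.trans_le ht₀t, by linarith, by ring, hμpq⟩ ▸ hp)

variable [TopologicalSpace E]

theorem IsCompact.mixtures [ContinuousAdd E] [ContinuousSMul ℝ E] {K M : Set E}
    (hK : IsCompact K) (hM : IsCompact M) (t₀ : ℝ) : IsCompact (mixtures t₀ K M) :=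
  (isCompact_Icc.prod (hK.prod hM)).image (by fun_prop)

variable [SeparatingDual ℝ E] [T2Space E] [MeasurableSpace E] [OpensMeasurableSpace E]
  {ξ : Measure E} [IsProbabilityMeasure ξ] {M : Set E} {b : E}

theorem mem_mixtures_of_forall_integral_eq {K D : Set E} {t₀ : ℝ} (hK : IsCompact K)
    (hKconv : Convex ℝ K) (hM : IsCompact M) (hMconv : Convex ℝ M) (hξM : ∀ᵐ x ∂ξ, x ∈ M)
    (hb : ∀ L : StrongDual ℝ E, L b = ∫ x, L x ∂ξ) (hD : MeasurableSet D) (hDK : D ⊆ K)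
    (ht₀ : 0 < t₀) (hξD : t₀ ≤ ξ.real D) :
    b ∈ mixtures t₀ K M := by
  have hDne : D.Nonempty :=
    nonempty_of_measure_ne_zero ((measureReal_ne_zero_iff (μ := ξ)).1 (by linarith))
  obtain ⟨p, hpK, hp⟩ := exists_mem_forall_integral_eq (η := ξ.restrict D) hK hKconv
    (hDne.mono hDK) (ae_restrict_of_forall_mem hD hDK)
  obtain ⟨q, hqM, hq⟩ := exists_mem_forall_integral_eq (η := ξ.restrict Dᶜ) hM hMconv
    hξM.exists (ae_restrict_of_ae hξM)
  refine ⟨(ξ.real D, p, q), ⟨⟨hξD, measureReal_le_one⟩, hpK, hqM⟩, ?_⟩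
  refine (SeparatingDual.eq_iff_forall_dual_eq (R := ℝ)).2 fun L => ?_
  rw [hb L, ← integral_add_compl hD
    (integrable_of_ae_mem_of_continuousOn hM hξM L.continuous.continuousOn), hp L, hq L]
  simp [probReal_compl_eq_one_sub hD]

/-- By pigeonhole, one of the pieces `F ∩ {x | i.2 < i.1 x}` has mass `≥ ε / #s`. -/
theorem mem_biUnion_mixtures_of_le_measureReal {F : Set E} {ε : ℝ}
    {s : Finset (StrongDual ℝ E × ℝ)} (hM : IsCompact M) (hMconv : Convex ℝ M)
    (hξM : ∀ᵐ x ∂ξ, x ∈ M) (hb : ∀ L : StrongDual ℝ E, L b = ∫ x, L x ∂ξ)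
    (hF : MeasurableSet F) (hFM : F ⊆ M) (hFs : F ⊆ ⋃ i ∈ s, {x | i.2 < i.1 x})
    (hε : 0 < ε) (hξF : ε ≤ ξ.real F) :
    b ∈ ⋃ i ∈ s, mixtures (ε / s.card) (M ∩ {x | i.2 ≤ i.1 x}) M := by
  have hs : s.Nonempty := Finset.nonempty_iff_ne_empty.2 <| by
    rintro rfl
    simp only [Finset.notMem_empty, iUnion_of_empty, iUnion_empty, subset_empty_iff] at hFs
    simp only [hFs, measureReal_empty] at hξF
    linarith
  have hsum : ∑ _i ∈ s, ε / s.card ≤ ∑ i ∈ s, ξ.real (F ∩ {x | i.2 < i.1 x}) :=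
    calc ∑ _i ∈ s, ε / s.card = ε := by
          rw [Finset.sum_const, nsmul_eq_mul, mul_div_cancel₀ _ (by simp [hs.ne_empty])]
      _ ≤ ξ.real (⋃ i ∈ s, F ∩ {x | i.2 < i.1 x}) := by
        rwa [← inter_iUnion₂, inter_eq_left.2 hFs]
      _ ≤ _ := measureReal_biUnion_finset_le _ _
  obtain ⟨i, hi, hξi⟩ := Finset.exists_le_of_sum_le hs hsum
  have hhalf : IsClosed {x | i.2 ≤ i.1 x} := isClosed_le continuous_const i.1.continuous
  exact mem_biUnion hi <| mem_mixtures_of_forall_integral_eq (hM.inter_right hhalf)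
    (hMconv.inter (convex_halfSpace_ge i.1.isLinear _)) hM hMconv hξM hb
    (hF.inter (isOpen_lt continuous_const i.1.continuous).measurableSet)
    (inter_subset_inter hFM fun x (hx : i.2 < i.1 x) => hx.le) (by positivity) hξi

end Mixtures

theorem IsCompact.exists_finset_halfSpaces_cover {E : Type*} [AddCommGroup E] [Module ℝ E]
    [TopologicalSpace E] [IsTopologicalAddGroup E] [ContinuousSMul ℝ E] [LocallyConvexSpace ℝ E]
    [T1Space E] {K : Set E} {μ : E} (hK : IsCompact K) (hμK : μ ∉ K) :
    ∃ s : Finset (StrongDual ℝ E × ℝ),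
      (∀ i ∈ s, i.1 μ < i.2) ∧ K ⊆ ⋃ i ∈ s, {x | i.2 < i.1 x} := by
  have hcover :
      K ⊆ ⋃ i ∈ {i : StrongDual ℝ E × ℝ | i.1 μ < i.2}, {x | i.2 < i.1 x} := by
    intro x hx
    obtain ⟨L, hL⟩ := geometric_hahn_banach_point_point (ne_of_mem_of_not_mem hx hμK).symm
    exact mem_biUnion (x := (L, (L μ + L x) / 2)) (show L μ < (L μ + L x) / 2 by linarith)
      (show (L μ + L x) / 2 < L x by linarith)
  obtain ⟨t, hts, ht, hKt⟩ := hK.elim_finite_subcover_image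
    (fun i _ => isOpen_lt continuous_const i.1.continuous) hcover
  exact ⟨ht.toFinset, fun i hi => hts (ht.mem_toFinset.1 hi), by simpa using hKt⟩

theorem exists_pos_forall_dist_lt_notMem_biUnion_mixtures {E : Type*} [AddCommGroup E]
    [Module ℝ E] [MetricSpace E] [ContinuousAdd E] [ContinuousSMul ℝ E] {M : Set E} {μ : E}
    {s : Finset (StrongDual ℝ E × ℝ)} {ε : ℝ} (hM : IsCompact M) (hμ : μ ∈ M.extremePoints ℝ)
    (hsμ : ∀ i ∈ s, i.1 μ < i.2) (hε : 0 < ε) :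
    ∃ δ > 0, ∀ b, dist b μ < δ → b ∉ ⋃ i ∈ s, mixtures (ε / s.card) (M ∩ {x | i.2 ≤ i.1 x}) M := by
  have hclosed : IsClosed (⋃ i ∈ s, mixtures (ε / s.card) (M ∩ {x | i.2 ≤ i.1 x}) M) :=
    (s.finite_toSet.isCompact_biUnion fun i _ =>
      (hM.inter_right (isClosed_le continuous_const i.1.continuous)).mixtures hM _).isClosed
  have hμ_notMem : μ ∉ ⋃ i ∈ s, mixtures (ε / s.card) (M ∩ {x | i.2 ≤ i.1 x}) M := by
    simp only [mem_iUnion₂, not_exists]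
    exact fun i hi => notMem_mixtures_of_mem_extremePoints hμ inter_subset_left
      (fun h => (hsμ i hi).not_ge h.2) (div_pos hε (by simpa using ⟨i, hi⟩))
  obtain ⟨δ, hδ, hball⟩ := Metric.isOpen_iff.1 hclosed.isOpen_compl μ hμ_notMem
  exact ⟨δ, hδ, fun b hb => hball hb⟩

theorem stmt4 {E : Type*} [AddCommGroup E] [Module ℝ E] [MetricSpace E]
    [IsTopologicalAddGroup E] [ContinuousSMul ℝ E] [LocallyConvexSpace ℝ E]
    [MeasurableSpace E] [BorelSpace E]
    (M : Set E) (hMc : IsCompact M) (hMconv : Convex ℝ M)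
    (μ : E) (hμ : μ ∈ M.extremePoints ℝ) :
    ∀ ε > 0, ∃ δ > 0, ∀ (ξ : Measure E) (b : E),
      IsProbabilityMeasure ξ → ξ M = 1 → b ∈ M →
      (∀ f : E → ℝ, ContinuousOn f M →
        (∀ t ∈ Set.Icc (0:ℝ) 1, ∀ a ∈ M, ∀ c ∈ M,
          f (t • a + (1 - t) • c) = t * f a + (1 - t) * f c) →
        f b = ∫ x, f x ∂ξ) →
      dist b μ < δ →
      1 - ε < (ξ {ν | ν ∈ M ∧ dist μ ν < ε}).toReal := by
  intro ε hε
  set F := {ν | ν ∈ M ∧ ε ≤ dist μ ν}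
  have hF : IsClosed F :=
    hMc.isClosed.inter (isClosed_le continuous_const (continuous_const.dist continuous_id))
  have hFM : F ⊆ M := fun _ h => h.1
  have hμF : μ ∉ F := fun h => (h.2.trans_lt' (by simpa using hε)).false
  obtain ⟨s, hsμ, hFs⟩ := (hMc.of_isClosed_subset hF hFM).exists_finset_halfSpaces_cover hμF
  obtain ⟨δ, hδ, hball⟩ := exists_pos_forall_dist_lt_notMem_biUnion_mixtures hMc hμ hsμ hε
  refine ⟨δ, hδ, fun ξ b _ hξM _ hbar hdist => ?_⟩
  by_contra! hle
  have hξM_ae : ∀ᵐ x ∂ξ, x ∈ M :=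
    (ae_mem_iff_measure_eq hMc.measurableSet.nullMeasurableSet).2 (by simp [hξM])
  have hξF : ε ≤ ξ.real F := by
    have : {ν | ν ∈ M ∧ dist μ ν < ε} = M \ F := by ext; simp [F]
    rw [← measureReal_def, this, measureReal_sdiff hFM hF.measurableSet,
      measureReal_def, hξM, ENNReal.toReal_one] at hle
    linarith
  have hb : ∀ L : StrongDual ℝ E, L b = ∫ x, L x ∂ξ := fun L =>
    hbar L L.continuous.continuousOn fun t _ a _ c _ => by simp
  exact hball b hdist <| mem_biUnion_mixtures_of_le_measureReal hMc hMconv hξM_ae hb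
    hF.measurableSet hFM hFs hε hξF
end

section
/- Let (X,T) be a compact metric dynamical system with the weak specification property witnessed by functions {M_ε : ε > 0}. Let (ε_k)_{k≥0} be a summable sequence of positive reals, let D = ⋃_{N≥1}[a_N,b_N] be the domain of an infinite specification S : D → X, and suppose there is an increasing sequence (N_k)_{k≥0} with N_0 = 0 such that for every k ≥ 1 and every N ∈ [N_{k−1}+1, N_k], the gap g_N = a_{N+1} − b_N − 1 satisfies g_N ≥ M_{ε_k}(l_{N+1}) where l_{N+1} = b_{N+1} − a_{N+1} + 1. Then there exists a point x₀ ∈ X such that d(S(n), T^n x₀) → 0 as n → ∞ along n ∈ D. -/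
/-!
Build points `y k` stage by stage: `y (k + 1)` shadows, within `ε (k + 1)`, both the orbit of `y k`
on an initial time segment and the blocks of stage `k + 1`. On a block of stage `j`, the orbits of
all later `y k` then stay within the tail `∑_{i > j} ε i` of the specification, and a limit point
of `(y k)`, which exists by compactness, inherits this bound; the tails tend to `0`.
-/

open MeasureTheory Filter Topology

section Specification

variable {X : Type*} [MetricSpace X] {T : X → X} {a b : ℕ → ℕ}

def ShadowsSpecs (T : X → X) (M : ℕ → ℕ) (e : ℝ) : Prop :=
  ∀ (N₁ : ℕ) (a b : ℕ → ℕ) (p : ℕ → X),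
    (∀ N, 1 ≤ N → N ≤ N₁ → a N ≤ b N) →
    (∀ N, 1 ≤ N → N ≤ N₁ → b N < a (N + 1)) →
    (∀ N, 1 ≤ N → N < N₁ → b N + 1 + M (b (N + 1) - a (N + 1) + 1) ≤ a (N + 1)) →
    ∃ x : X, ∀ N, 1 ≤ N → N ≤ N₁ → ∀ n, a N ≤ n → n ≤ b N →
      dist (T^[n] (p N)) (T^[n] x) < e

theorem b_lt_a_of_lt (hab : ∀ N, 1 ≤ N → a N ≤ b N) (hsep : ∀ N, 1 ≤ N → b N < a (N + 1))
    {m n : ℕ} (hm : 1 ≤ m) (hmn : m < n) : b m < a n := by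
  induction n, hmn using Nat.le_induction with
  | base => exact hsep m hm
  | succ n hmn ih => exact ih.trans_le ((hab n (by omega)).trans (hsep n (by omega)).le)

theorem b_le_b_of_le (hab : ∀ N, 1 ≤ N → a N ≤ b N) (hsep : ∀ N, 1 ≤ N → b N < a (N + 1))
    {m n : ℕ} (hm : 1 ≤ m) (hmn : m ≤ n) : b m ≤ b n := by
  rcases hmn.eq_or_lt with rfl | hlt
  · rfl
  · exact (b_lt_a_of_lt hab hsep hm hlt).le.trans (hab n (by omega))

/-- The prefix `[0, b (j + 1)]`, labelled by `z`, serves as the first block of a finite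
specification; its gap to block `j + 2` is the gap after block `j + 1`. -/
theorem ShadowsSpecs.exists_prefix_and_blocks {M : ℕ → ℕ} {e : ℝ} (h : ShadowsSpecs T M e)
    (hab : ∀ N, 1 ≤ N → a N ≤ b N) (hsep : ∀ N, 1 ≤ N → b N < a (N + 1)) (p : ℕ → X)
    {j m : ℕ} (hjm : j ≤ m)
    (hgap : ∀ N, j + 1 ≤ N → N ≤ m → b N + 1 + M (b (N + 1) - a (N + 1) + 1) ≤ a (N + 1))
    (z : X) :
    ∃ x : X, (∀ n ≤ b (j + 1), dist (T^[n] z) (T^[n] x) < e) ∧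
      ∀ N, j + 1 < N → N ≤ m + 1 → ∀ n, a N ≤ n → n ≤ b N → dist (T^[n] (p N)) (T^[n] x) < e := by
  obtain ⟨x, hx⟩ := h (m + 1 - j) (fun i => if i ≤ 1 then 0 else a (j + i)) (fun i => b (j + i))
    (fun i => if i ≤ 1 then z else p (j + i))
    (fun i _ _ => by
      split_ifs
      · exact Nat.zero_le _
      · exact hab _ (by omega))
    (fun i hi _ => by
      rw [if_neg (by omega), ← add_assoc]
      exact hsep (j + i) (by omega))
    (fun i hi hiN => by
      rw [if_neg (by omega), ← add_assoc]
      exact hgap (j + i) (by omega) (by omega))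
  refine ⟨x, fun n hn => by simpa using hx 1 le_rfl (by omega) n (by simp) hn, ?_⟩
  intro N hjN hNm n han hnb
  obtain ⟨i, rfl⟩ : ∃ i, N = j + i := ⟨N - j, by omega⟩
  have := hx i (by omega) (by omega) n
  simp only [if_neg (show ¬ i ≤ 1 by omega)] at this
  exact this han hnb

theorem exists_shadowing_sequence (hab : ∀ N, 1 ≤ N → a N ≤ b N)
    (hsep : ∀ N, 1 ≤ N → b N < a (N + 1)) (p : ℕ → X) {Nseq : ℕ → ℕ} (hNmono : Monotone Nseq)
    {M : ℕ → ℕ → ℕ} {e : ℕ → ℝ} (hsh : ∀ k, ShadowsSpecs T (M k) (e k))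
    (hgap : ∀ k N, Nseq k + 1 ≤ N → N ≤ Nseq (k + 1) →
      b N + 1 + M k (b (N + 1) - a (N + 1) + 1) ≤ a (N + 1))
    (x : X) :
    ∃ y : ℕ → X, ∀ k, (∀ n ≤ b (Nseq k + 1), dist (T^[n] (y k)) (T^[n] (y (k + 1))) < e k) ∧
      ∀ N, Nseq k + 1 < N → N ≤ Nseq (k + 1) + 1 → ∀ n, a N ≤ n → n ≤ b N →
        dist (T^[n] (p N)) (T^[n] (y (k + 1))) < e k := by
  choose next hnext using fun k =>
    (hsh k).exists_prefix_and_blocks hab hsep p (hNmono k.le_succ) (hgap k)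
  exact ⟨fun k => Nat.rec x (fun k z => next k z) k, fun k => hnext k _⟩

theorem dist_iterate_le_sum_Ico (hab : ∀ N, 1 ≤ N → a N ≤ b N)
    (hsep : ∀ N, 1 ≤ N → b N < a (N + 1)) {p y : ℕ → X} {Nseq : ℕ → ℕ} (hNmono : Monotone Nseq)
    {e : ℕ → ℝ}
    (hstep : ∀ k, ∀ n ≤ b (Nseq k + 1), dist (T^[n] (y k)) (T^[n] (y (k + 1))) < e k)
    (hblock : ∀ k N, Nseq k + 1 < N → N ≤ Nseq (k + 1) + 1 → ∀ n, a N ≤ n → n ≤ b N →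
      dist (T^[n] (p N)) (T^[n] (y (k + 1))) < e k)
    {j N n k : ℕ} (hjN : Nseq j + 1 < N) (hNj : N ≤ Nseq (j + 1) + 1) (han : a N ≤ n)
    (hnb : n ≤ b N) (hjk : j < k) :
    dist (T^[n] (p N)) (T^[n] (y k)) ≤ ∑ i ∈ Finset.Ico j k, e i := by
  have hchain : dist (T^[n] (y (j + 1))) (T^[n] (y k)) ≤ ∑ i ∈ Finset.Ico (j + 1) k, e i :=
    dist_le_Ico_sum_of_dist_le (f := fun i => T^[n] (y i)) hjk fun {i} hji _ =>
      (hstep i n (hnb.trans (b_le_b_of_le hab hsep (by omega)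
        (hNj.trans (by simpa using hNmono hji))))).le
  calc dist (T^[n] (p N)) (T^[n] (y k))
      ≤ dist (T^[n] (p N)) (T^[n] (y (j + 1))) + dist (T^[n] (y (j + 1))) (T^[n] (y k)) :=
        dist_triangle _ _ _
    _ ≤ e j + ∑ i ∈ Finset.Ico (j + 1) k, e i :=
        add_le_add (hblock j N hjN hNj n han hnb).le hchain
    _ = ∑ i ∈ Finset.Ico j k, e i := (Finset.sum_eq_sum_Ico_succ_bot hjk e).symm

end Specification

theorem sum_Ico_le_tsum_nat_add {f : ℕ → ℝ} (hf : ∀ i, 0 ≤ f i) (hs : Summable f) {m j : ℕ}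
    (hmj : m ≤ j) (k : ℕ) : ∑ i ∈ Finset.Ico j k, f i ≤ ∑' i, f (i + m) :=
  calc ∑ i ∈ Finset.Ico j k, f i
      ≤ ∑ i ∈ Finset.Ico m k, f i :=
        Finset.sum_le_sum_of_subset_of_nonneg (Finset.Ico_subset_Ico_left hmj) fun i _ _ => hf i
    _ = ∑ i ∈ Finset.range (k - m), f (i + m) := by
        simp only [Finset.sum_Ico_eq_sum_range, add_comm m]
    _ ≤ ∑' i, f (i + m) :=
        ((summable_nat_add_iff m).2 hs).sum_le_tsum _ fun i _ => hf _

theorem stmt6_general {X : Type*} [MetricSpace X] [CompactSpace X]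
    (T : X → X) (hTc : Continuous T)
    (M : ℝ → ℕ → ℕ)
    (hspec : ∀ e : ℝ, 0 < e →
      Tendsto (fun l : ℕ => (M e l : ℝ) / (l : ℝ)) atTop (nhds 0) ∧
      ∀ (N₁ : ℕ) (a b : ℕ → ℕ) (p : ℕ → X),
        (∀ N, 1 ≤ N → N ≤ N₁ → a N ≤ b N) →
        (∀ N, 1 ≤ N → N ≤ N₁ → b N < a (N + 1)) →
        (∀ N, 1 ≤ N → N < N₁ → b N + 1 + M e (b (N + 1) - a (N + 1) + 1) ≤ a (N + 1)) →
        ∃ x : X, ∀ N, 1 ≤ N → N ≤ N₁ → ∀ n, a N ≤ n → n ≤ b N →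
          dist (T^[n] (p N)) (T^[n] x) < e)
    (ε : ℕ → ℝ) (hεpos : ∀ k, 0 < ε k) (hεsum : Summable ε)
    (a b : ℕ → ℕ) (p : ℕ → X)
    (hab : ∀ N, 1 ≤ N → a N ≤ b N) (hgap0 : ∀ N, 1 ≤ N → b N < a (N + 1))
    (Nseq : ℕ → ℕ) (hNmono : StrictMono Nseq)
    (hgap : ∀ k, 1 ≤ k → ∀ N, Nseq (k - 1) + 1 ≤ N → N ≤ Nseq k →
      b N + 1 + M (ε k) (b (N + 1) - a (N + 1) + 1) ≤ a (N + 1)) :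
    ∃ x₀ : X, ∀ η > 0, ∃ n₀ : ℕ, ∀ N, 1 ≤ N → ∀ n, a N ≤ n → n ≤ b N → n₀ ≤ n →
      dist (T^[n] (p N)) (T^[n] x₀) < η := by
  obtain ⟨y, hy⟩ := exists_shadowing_sequence hab hgap0 p hNmono.monotone
    (fun k => (hspec (ε (k + 1)) (hεpos _)).2)
    (fun k N h₁ h₂ => hgap (k + 1) k.succ_pos N (by simpa using h₁) h₂) (p 0)
  obtain ⟨x₀, φ, hφ, hlim⟩ := CompactSpace.tendsto_subseq y
  refine ⟨x₀, fun η hη => ?_⟩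
  obtain ⟨j₀, hj₀⟩ := ((tendsto_sum_nat_add fun i => ε (i + 1)).eventually (gt_mem_nhds hη)).exists
  refine ⟨a (Nseq j₀ + 2), fun N hN n han hnb hn₀ => ?_⟩
  have hj₀N : Nseq j₀ + 1 < N := by
    by_contra! h
    have := b_lt_a_of_lt hab hgap0 hN (show N < Nseq j₀ + 2 by omega)
    omega
  obtain ⟨j, hjN, hNj⟩ := (hNmono.add_const 1).exists_between_of_tendsto_atTop
    (hNmono.add_const 1).tendsto_atTop (x := N)
    (by have := hNmono.monotone j₀.zero_le; omega)
  have hj₀j : j₀ ≤ j :=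
    Nat.lt_succ_iff.1 (hNmono.lt_iff_lt.1 (show Nseq j₀ < Nseq (j + 1) by omega))
  have hbound : ∀ᶠ k in atTop, dist (T^[n] (p N)) (T^[n] (y k)) ≤ ∑' i, ε (i + j₀ + 1) :=
    (eventually_gt_atTop j).mono fun k hjk =>
      (dist_iterate_le_sum_Ico hab hgap0 hNmono.monotone (fun k => (hy k).1) (fun k => (hy k).2)
        hjN hNj han hnb hjk).trans
      (sum_Ico_le_tsum_nat_add (fun i => (hεpos _).le) ((summable_nat_add_iff 1).2 hεsum) hj₀j k)
  have hdist : Tendsto (fun k => dist (T^[n] (p N)) (T^[n] (y (φ k)))) atTop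
      (𝓝 (dist (T^[n] (p N)) (T^[n] x₀))) :=
    tendsto_const_nhds.dist (((hTc.iterate n).tendsto x₀).comp hlim)
  exact (le_of_tendsto hdist (hφ.tendsto_atTop.eventually hbound)).trans_lt hj₀

theorem stmt6 {X : Type*} [MetricSpace X] [CompactSpace X]
    (T : X → X) (hTc : Continuous T)
    (M : ℝ → ℕ → ℕ)
    (hspec : ∀ e : ℝ, 0 < e →
      Tendsto (fun l : ℕ => (M e l : ℝ) / (l : ℝ)) atTop (nhds 0) ∧
      ∀ (N₁ : ℕ) (a b : ℕ → ℕ) (p : ℕ → X),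
        (∀ N, 1 ≤ N → N ≤ N₁ → a N ≤ b N) →
        (∀ N, 1 ≤ N → N ≤ N₁ → b N < a (N + 1)) →
        (∀ N, 1 ≤ N → N < N₁ → b N + 1 + M e (b (N + 1) - a (N + 1) + 1) ≤ a (N + 1)) →
        ∃ x : X, ∀ N, 1 ≤ N → N ≤ N₁ → ∀ n, a N ≤ n → n ≤ b N →
          dist (T^[n] (p N)) (T^[n] x) < e)
    (ε : ℕ → ℝ) (hεpos : ∀ k, 0 < ε k) (hεsum : Summable ε)
    (a b : ℕ → ℕ) (p : ℕ → X)
    (hab : ∀ N, 1 ≤ N → a N ≤ b N) (hgap0 : ∀ N, 1 ≤ N → b N < a (N + 1))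
    (Nseq : ℕ → ℕ) (hNmono : StrictMono Nseq) (hN0 : Nseq 0 = 0)
    (hgap : ∀ k, 1 ≤ k → ∀ N, Nseq (k - 1) + 1 ≤ N → N ≤ Nseq k →
      b N + 1 + M (ε k) (b (N + 1) - a (N + 1) + 1) ≤ a (N + 1)) :
    ∃ x₀ : X, ∀ η > 0, ∃ n₀ : ℕ, ∀ N, 1 ≤ N → ∀ n, a N ≤ n → n ≤ b N → n₀ ≤ n →
      dist (T^[n] (p N)) (T^[n] x₀) < η :=
  stmt6_general T hTc M hspec ε hεpos hεsum a b p hab hgap0 Nseq hNmono hgap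
end

section
/- Let (X,T) be a compact metric system, S : D → X an infinite specification whose domain D ⊆ ℕ has density one, and x₀ ∈ X a point with lim_{n∈D} d(S(n), T^n x₀) = 0. Then x₀ quasi-generates exactly the same invariant measures as S: for any increasing sequence (n_k), the empirical measures of x₀ along [0,n_k] converge to an invariant measure μ if and only if the empirical measures of S restricted to D ∩ [0,n_k] converge to μ. -/
/-!
Off `D`, the orbit average of `x₀` only loses a proportion of terms that tends to zero, and
dividing by `#(D ∩ [0, n])` instead of `n + 1` changes little for the same reason. On `D`,
`f (S n)` and `f (T^[n] x₀)` become uniformly close by uniform continuity of `f` on the compact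
space `X`, so their difference is a Cesàro-null sequence. Hence the two empirical averages of any
continuous `f` are asymptotic to each other, and one converges along `(n_k)` iff the other does.
-/

open MeasureTheory Filter Topology Finset

def HasDensityOne (D : ℕ → Prop) [DecidablePred D] : Prop :=
  Tendsto (fun n : ℕ => (#{i ∈ range (n + 1) | D i} : ℝ) / ((n : ℝ) + 1)) atTop (𝓝 1)

lemma norm_sum_le_card_mul {ι : Type*} (s : Finset ι) {u : ι → ℝ} {M : ℝ}
    (hu : ∀ i ∈ s, ‖u i‖ ≤ M) : ‖∑ i ∈ s, u i‖ ≤ #s * M := by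
  simpa using norm_sum_le_of_le s hu

lemma UniformContinuous.tendsto_dist_comp {α β ι : Type*} [PseudoMetricSpace α]
    [PseudoMetricSpace β] {f : α → β} (hf : UniformContinuous f) {x y : ι → α} {l : Filter ι}
    (h : Tendsto (fun i => dist (x i) (y i)) l (𝓝 0)) :
    Tendsto (fun i => dist (f (x i)) (f (y i))) l (𝓝 0) :=
  tendsto_uniformity_iff_dist_tendsto_zero.1 <| Tendsto.comp hf <|
    (tendsto_uniformity_iff_dist_tendsto_zero (f := fun i => (x i, y i))).2 h

section DensityOne

variable {D : ℕ → Prop} [DecidablePred D]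

lemma tendsto_sum_sub_sum_filter_div (hD : HasDensityOne D) {u : ℕ → ℝ} {M : ℝ}
    (hu : ∀ i, ‖u i‖ ≤ M) :
    Tendsto (fun n : ℕ =>
      (∑ i ∈ range (n + 1), u i - ∑ i ∈ range (n + 1) with D i, u i) / ((n : ℝ) + 1))
      atTop (𝓝 0) := by
  have hbound : ∀ n : ℕ,
      ‖(∑ i ∈ range (n + 1), u i - ∑ i ∈ range (n + 1) with D i, u i) / ((n : ℝ) + 1)‖
        ≤ M * (1 - (#{i ∈ range (n + 1) | D i} : ℝ) / ((n : ℝ) + 1)) := by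
    intro n
    have hn : (0 : ℝ) < n + 1 := by positivity
    have hcard : (#{i ∈ range (n + 1) | ¬D i} : ℝ) = n + 1 - #{i ∈ range (n + 1) | D i} := by
      rw [eq_sub_iff_add_eq, add_comm]
      exact_mod_cast (card_filter_add_card_filter_not D).trans (card_range _)
    rw [← sum_filter_add_sum_filter_not (range (n + 1)) D, add_sub_cancel_left, norm_div,
      Real.norm_of_nonneg hn.le, div_le_iff₀ hn]
    calc ‖∑ i ∈ range (n + 1) with ¬D i, u i‖
        ≤ #{i ∈ range (n + 1) | ¬D i} * M := norm_sum_le_card_mul _ fun i _ => hu i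
      _ = M * (1 - #{i ∈ range (n + 1) | D i} / ((n : ℝ) + 1)) * (n + 1) := by
        rw [hcard]; field_simp
  refine squeeze_zero_norm hbound ?_
  simpa using ((tendsto_const_nhds (x := (1 : ℝ))).sub hD).const_mul M

lemma tendsto_sum_filter_div_sub_div_card (hD : HasDensityOne D) {v : ℕ → ℝ} {M : ℝ}
    (hv : ∀ i, ‖v i‖ ≤ M) :
    Tendsto (fun n : ℕ => (∑ i ∈ range (n + 1) with D i, v i) / ((n : ℝ) + 1)
      - (∑ i ∈ range (n + 1) with D i, v i) / #{i ∈ range (n + 1) | D i}) atTop (𝓝 0) := by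
  have hbound : ∀ n : ℕ,
      ‖(∑ i ∈ range (n + 1) with D i, v i) / ((n : ℝ) + 1)
        - (∑ i ∈ range (n + 1) with D i, v i) / #{i ∈ range (n + 1) | D i}‖
        ≤ M * |(#{i ∈ range (n + 1) | D i} : ℝ) / ((n : ℝ) + 1) - 1| := by
    intro n
    set F := {i ∈ range (n + 1) | D i}
    have hM : 0 ≤ M := (norm_nonneg _).trans (hv 0)
    rcases F.eq_empty_or_nonempty with hF | hF
    · simp only [hF, sum_empty, zero_div, sub_zero, norm_zero]
      positivity
    have hc : (0 : ℝ) < #F := by exact_mod_cast hF.card_pos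
    have hfactor : (∑ i ∈ F, v i) / ((n : ℝ) + 1) - (∑ i ∈ F, v i) / #F
        = (∑ i ∈ F, v i) / #F * (#F / ((n : ℝ) + 1) - 1) := by
      field_simp
    rw [hfactor, norm_mul, Real.norm_eq_abs (_ - 1)]
    gcongr
    rw [norm_div, Real.norm_of_nonneg hc.le, div_le_iff₀ hc, mul_comm]
    exact norm_sum_le_card_mul F fun i _ => hv i
  refine squeeze_zero_norm hbound ?_
  simpa using (hD.sub (tendsto_const_nhds (x := (1 : ℝ)))).abs.const_mul M

lemma tendsto_sum_filter_sub_sum_filter_div {u v : ℕ → ℝ}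
    (huv : Tendsto (fun n => dist (u n) (v n)) (atTop ⊓ 𝓟 {n | D n}) (𝓝 0)) :
    Tendsto (fun n : ℕ =>
      (∑ i ∈ range (n + 1) with D i, u i - ∑ i ∈ range (n + 1) with D i, v i) / ((n : ℝ) + 1))
      atTop (𝓝 0) := by
  have hdiff : Tendsto (fun n => u n - v n) (atTop ⊓ 𝓟 {n | D n}) (𝓝 0) := by
    rw [tendsto_zero_iff_abs_tendsto_zero]
    simpa only [Function.comp_def, ← Real.dist_eq] using huv
  have hw : Tendsto (fun n => if D n then u n - v n else 0) atTop (𝓝 0) :=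
    hdiff.if tendsto_const_nhds
  refine (hw.cesaro.comp (tendsto_add_atTop_nat 1)).congr fun n => ?_
  rw [Function.comp_apply, ← sum_sub_distrib, sum_filter]
  push_cast
  rw [inv_mul_eq_div]

theorem tendsto_average_sub_average_filter (hD : HasDensityOne D) {u v : ℕ → ℝ} {M : ℝ}
    (hu : ∀ i, ‖u i‖ ≤ M) (hv : ∀ i, ‖v i‖ ≤ M)
    (huv : Tendsto (fun n => dist (u n) (v n)) (atTop ⊓ 𝓟 {n | D n}) (𝓝 0)) :
    Tendsto (fun n : ℕ => (∑ i ∈ range (n + 1), u i) / ((n : ℝ) + 1)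
      - (∑ i ∈ range (n + 1) with D i, v i) / #{i ∈ range (n + 1) | D i}) atTop (𝓝 0) := by
  have h := ((tendsto_sum_sub_sum_filter_div hD hu).add
    (tendsto_sum_filter_sub_sum_filter_div huv)).add (tendsto_sum_filter_div_sub_div_card hD hv)
  simp only [add_zero] at h
  refine h.congr fun n => ?_
  ring

end DensityOne

theorem stmt7_general {X : Type*} [MetricSpace X] [CompactSpace X] [MeasurableSpace X]
    (T : X → X)
    (D : ℕ → Prop) [DecidablePred D]
    (S : ℕ → X)
    (hdens : Tendsto (fun n : ℕ =>
        (((Finset.range (n + 1)).filter D).card : ℝ) / ((n : ℝ) + 1)) atTop (nhds 1))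
    (x₀ : X)
    (hshadow : ∀ η > 0, ∃ n₀, ∀ n, n₀ ≤ n → D n → dist (S n) (T^[n] x₀) < η)
    (nk : ℕ → ℕ) (hnk : StrictMono nk)
    (μ : Measure X) :
    (∀ f : C(X, ℝ), Tendsto (fun k =>
        (∑ i ∈ Finset.range (nk k + 1), f (T^[i] x₀)) / ((nk k : ℝ) + 1))
        atTop (nhds (∫ x, f x ∂μ)))
    ↔
    (∀ f : C(X, ℝ), Tendsto (fun k =>
        (∑ n ∈ (Finset.range (nk k + 1)).filter D, f (S n)) /
          (((Finset.range (nk k + 1)).filter D).card : ℝ))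
        atTop (nhds (∫ x, f x ∂μ))) := by
  have hclose : Tendsto (fun n => dist (T^[n] x₀) (S n)) (atTop ⊓ 𝓟 {n | D n}) (𝓝 0) := by
    refine Metric.tendsto_nhds.2 fun η hη => eventually_inf_principal.2 ?_
    obtain ⟨n₀, hn₀⟩ := hshadow η hη
    filter_upwards [eventually_ge_atTop n₀] with n hn hDn
    simpa [dist_comm] using hn₀ n hn hDn
  refine forall_congr' fun f => tendsto_iff_of_dist ?_
  have hf := CompactSpace.uniformContinuous_of_continuous f.continuous
  have h := tendsto_average_sub_average_filter hdens (f.norm_coe_le_norm <| T^[·] x₀)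
    (f.norm_coe_le_norm <| S ·) (hf.tendsto_dist_comp hclose)
  simpa only [Real.dist_eq, abs_zero, Function.comp_def] using (h.comp hnk.tendsto_atTop).abs

theorem stmt7 {X : Type*} [MetricSpace X] [CompactSpace X] [MeasurableSpace X] [BorelSpace X]
    (T : X → X) (hTc : Continuous T)
    (D : ℕ → Prop) [DecidablePred D]
    (a b : ℕ → ℕ) (p : ℕ → X) (S : ℕ → X)
    (hab : ∀ N, 1 ≤ N → a N ≤ b N) (hgap : ∀ N, 1 ≤ N → b N < a (N + 1))
    (hD : ∀ n, D n ↔ ∃ N, 1 ≤ N ∧ a N ≤ n ∧ n ≤ b N)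
    (hS : ∀ N, 1 ≤ N → ∀ n, a N ≤ n → n ≤ b N → S n = T^[n] (p N))
    (hdens : Tendsto (fun n : ℕ =>
        (((Finset.range (n + 1)).filter D).card : ℝ) / ((n : ℝ) + 1)) atTop (nhds 1))
    (x₀ : X)
    (hshadow : ∀ η > 0, ∃ n₀, ∀ n, n₀ ≤ n → D n → dist (S n) (T^[n] x₀) < η)
    (nk : ℕ → ℕ) (hnk : StrictMono nk)
    (μ : Measure X) (hprob : IsProbabilityMeasure μ) (hinv : μ.map T = μ) :
    (∀ f : C(X, ℝ), Tendsto (fun k =>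
        (∑ i ∈ Finset.range (nk k + 1), f (T^[i] x₀)) / ((nk k : ℝ) + 1))
        atTop (nhds (∫ x, f x ∂μ)))
    ↔
    (∀ f : C(X, ℝ), Tendsto (fun k =>
        (∑ n ∈ (Finset.range (nk k + 1)).filter D, f (S n)) /
          (((Finset.range (nk k + 1)).filter D).card : ℝ))
        atTop (nhds (∫ x, f x ∂μ))) :=
  stmt7_general T D S hdens x₀ hshadow nk hnk μ
end

section
/- Let (X,T) be a compact metric dynamical system and μ a T-invariant Borel probability measure. For each ε > 0 there exists δ > 0 with the following property. Let 𝒫 be a finite Borel partition of X all of whose atoms have diameter at most δ, let l, N₁ ∈ ℕ, let points x_1,…,x_{N₁} ∈ X and positions 0 ≤ a_1 < a_2 < … < a_{N₁} with a_{N+1} − a_N ≥ l for all N, and define the specification S by S[a_N, a_N + l − 1] = x_N[0, l−1]. Suppose that for every atom B of 𝒫^l = ⋁_{n=0}^{l−1} T^{−n}𝒫, the frequency |{N ∈ [1,N₁] : x_N ∈ B}| / N₁ is within δ/|𝒫^l| of μ(B). Then the empirical measure μ_S = (1/(N₁ l)) ∑_{n∈D} δ_{S(n)}, where D = ⋃_{N=1}^{N₁}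 [a_N, a_N + l − 1], satisfies d(μ_S, μ) < ε in the weak* metric. -/
open MeasureTheory Filter Topology
open scoped Classical

/-!
Write `g = ∑_{n<l} f ∘ Tⁿ` for the Birkhoff sum of length `l`. If two points lie in the same
atom of `𝒫^l`, their first `l` iterates are pairwise `δ`-close, so by uniform continuity of `f`
the function `g` oscillates by at most `l ε / 4` on each atom: it is uniformly close to a step
function `u` that is constant on the atoms. For `u`, the empirical average over the points `x_N`
and the `μ`-integral differ by `∑_B |freq(B) - μ(B)| · sup |g| ≤ δ l ‖f‖`, and by invariance
`∫ g dμ = l ∫ f dμ`. Dividing by `l` gives the claim.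
-/

section Coding

variable {X W α : Type*} [Fintype W] {π : X → W}

theorem comp_eq_sum_indicator (u : W → ℝ) (y : X) :
    u (π y) = ∑ w, (π ⁻¹' {w}).indicator (fun _ => u w) y := by
  simp [Set.indicator]

theorem sum_comp_div_card_eq_sum [DecidableEq W] (s : Finset α) (x : α → X) (u : W → ℝ) :
    (∑ i ∈ s, u (π (x i))) / s.card
      = ∑ w, ((s.filter fun i => π (x i) = w).card / s.card : ℝ) * u w := by
  rw [← Finset.sum_fiberwise s (fun i => π (x i)), Finset.sum_div]
  refine Finset.sum_congr rfl fun w _ => ?_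
  rw [Finset.sum_congr rfl fun i hi => by rw [(Finset.mem_filter.mp hi).2], Finset.sum_const,
    nsmul_eq_mul]
  ring

variable [MeasurableSpace X]

theorem integrable_comp_of_measurableSet_fiber (μ : Measure X) [IsFiniteMeasure μ]
    (hπ : ∀ w, MeasurableSet (π ⁻¹' {w})) (u : W → ℝ) :
    Integrable (fun y => u (π y)) μ := by
  simp_rw [comp_eq_sum_indicator u]
  exact integrable_finsetSum _ fun w _ => (integrable_const (u w)).indicator (hπ w)

theorem integral_comp_eq_sum_measureReal (μ : Measure X) [IsFiniteMeasure μ]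
    (hπ : ∀ w, MeasurableSet (π ⁻¹' {w})) (u : W → ℝ) :
    ∫ y, u (π y) ∂μ = ∑ w, μ.real (π ⁻¹' {w}) * u w := by
  simp_rw [comp_eq_sum_indicator u]
  rw [integral_finsetSum _ fun w _ => (integrable_const (u w)).indicator (hπ w)]
  simp only [integral_indicator_const _ (hπ _), smul_eq_mul]

variable [DecidableEq W] (μ : Measure X) [IsProbabilityMeasure μ] (s : Finset α) (x : α → X)
  {θ B : ℝ}

theorem abs_average_comp_sub_integral_comp_le (hπ : ∀ w, MeasurableSet (π ⁻¹' {w}))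
    (hfreq : ∀ w, (π ⁻¹' {w}).Nonempty →
      |((s.filter fun i => π (x i) = w).card / s.card : ℝ) - μ.real (π ⁻¹' {w})| ≤ θ)
    (u : W → ℝ)
    (hu : ∀ w, (π ⁻¹' {w}).Nonempty → |u w| ≤ B) :
    |(∑ i ∈ s, u (π (x i))) / s.card - ∫ y, u (π y) ∂μ|
      ≤ (Finset.univ.filter fun w => (π ⁻¹' {w}).Nonempty).card * (θ * B) := by
  rw [sum_comp_div_card_eq_sum, integral_comp_eq_sum_measureReal μ hπ, ← Finset.sum_sub_distrib]
  have hterm : ∀ w, |((s.filter fun i => π (x i) = w).card / s.card : ℝ) * u w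
      - μ.real (π ⁻¹' {w}) * u w| ≤ if (π ⁻¹' {w}).Nonempty then θ * B else 0 := by
    intro w
    split_ifs with hw
    · rw [← sub_mul, abs_mul]
      exact mul_le_mul (hfreq w hw) (hu w hw) (abs_nonneg _) ((abs_nonneg _).trans (hfreq w hw))
    · have hfiber : π ⁻¹' {w} = ∅ := Set.not_nonempty_iff_eq_empty.mp hw
      have hsamples : s.filter (fun i => π (x i) = w) = ∅ :=
        Finset.filter_eq_empty_iff.mpr fun i _ hi => hw ⟨x i, hi⟩
      simp [hfiber, hsamples]
  calc _ ≤ ∑ w, |((s.filter fun i => π (x i) = w).card / s.card : ℝ) * u w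
          - μ.real (π ⁻¹' {w}) * u w| := Finset.abs_sum_le_sum_abs _ _
    _ ≤ ∑ w, if (π ⁻¹' {w}).Nonempty then θ * B else 0 := Finset.sum_le_sum fun w _ => hterm w
    _ = _ := by
      rw [Finset.sum_ite, Finset.sum_const_zero, add_zero, Finset.sum_const, nsmul_eq_mul]

theorem abs_average_sub_integral_le_of_frequency (hπ : ∀ w, MeasurableSet (π ⁻¹' {w}))
    (hfreq : ∀ w, (π ⁻¹' {w}).Nonempty →
      |((s.filter fun i => π (x i) = w).card / s.card : ℝ) - μ.real (π ⁻¹' {w})| ≤ θ)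
    {g : X → ℝ} {η : ℝ} (hg : Integrable g μ)
    (hosc : ∀ y z, π y = π z → |g y - g z| ≤ η) (hB : ∀ y, |g y| ≤ B) :
    |(∑ i ∈ s, g (x i)) / s.card - ∫ y, g y ∂μ|
      ≤ 2 * η + (Finset.univ.filter fun w => (π ⁻¹' {w}).Nonempty).card * (θ * B) := by
  let u : W → ℝ := fun w => if h : (π ⁻¹' {w}).Nonempty then g h.some else 0
  have hgu : ∀ y, |g y - u (π y)| ≤ η := fun y => by
    have h : (π ⁻¹' {π y}).Nonempty := ⟨y, rfl⟩
    simpa only [u, dif_pos h] using hosc _ _ h.some_mem.symm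
  have hu : ∀ w, (π ⁻¹' {w}).Nonempty → |u w| ≤ B := fun w hw => by
    simpa only [u, dif_pos hw] using hB _
  -- `s` may be empty, and then both sample averages are `0 / 0 = 0`.
  have hη : 0 ≤ η := by
    obtain ⟨y⟩ := nonempty_of_isProbabilityMeasure μ
    exact (abs_nonneg _).trans (hgu y)
  have hsamples : |(∑ i ∈ s, g (x i)) / s.card - (∑ i ∈ s, u (π (x i))) / s.card| ≤ η := by
    rw [← sub_div, ← Finset.sum_sub_distrib, abs_div, Nat.abs_cast]
    refine div_le_of_le_mul₀ (Nat.cast_nonneg _) hη ?_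
    calc _ ≤ ∑ i ∈ s, |g (x i) - u (π (x i))| := Finset.abs_sum_le_sum_abs _ _
      _ ≤ s.card • η := Finset.sum_le_card_nsmul s _ η fun i _ => hgu (x i)
      _ = η * s.card := by rw [nsmul_eq_mul, mul_comm]
  have hintegrals : |∫ y, g y ∂μ - ∫ y, u (π y) ∂μ| ≤ η := by
    rw [← integral_sub hg (integrable_comp_of_measurableSet_fiber μ hπ u)]
    simpa using norm_integral_le_of_norm_le_const (μ := μ) (f := fun y => g y - u (π y))
      (Eventually.of_forall hgu)
  have hstep := abs_average_comp_sub_integral_comp_le μ s x hπ hfreq u hu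
  have h₁ := abs_sub_le ((∑ i ∈ s, g (x i)) / s.card) ((∑ i ∈ s, u (π (x i))) / s.card)
    (∫ y, g y ∂μ)
  have h₂ := abs_sub_le ((∑ i ∈ s, u (π (x i))) / s.card) (∫ y, u (π y) ∂μ) (∫ y, g y ∂μ)
  rw [abs_sub_comm (∫ y, u (π y) ∂μ)] at h₂
  linarith

end Coding

/-- The fibres of `itinerary T φ l` are the atoms of `𝒫^l`. -/
def itinerary {X ι : Type*} (T : X → X) (φ : X → ι) (l : ℕ) (y : X) : Fin l → ι :=
  fun m => φ (T^[m] y)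

section Itinerary

variable {X ι : Type*} {T : X → X} {φ : X → ι} {l : ℕ}

theorem itinerary_eq_iff {y : X} {w : Fin l → ι} :
    itinerary T φ l y = w ↔ ∀ m : Fin l, φ (T^[m] y) = w m :=
  funext_iff

theorem itinerary_preimage_singleton (w : Fin l → ι) :
    itinerary T φ l ⁻¹' {w} = {y | ∀ m : Fin l, φ (T^[m] y) = w m} :=
  Set.ext fun _ => itinerary_eq_iff

theorem measurableSet_itinerary_preimage [MeasurableSpace X] (hT : Measurable T)
    (hφ : ∀ i, MeasurableSet (φ ⁻¹' {i})) (w : Fin l → ι) :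
    MeasurableSet (itinerary T φ l ⁻¹' {w}) := by
  rw [itinerary_preimage_singleton, Set.ofPred_forall]
  exact MeasurableSet.iInter fun m => (hφ (w m)).preimage (hT.iterate m)

theorem dist_iterate_le_of_itinerary_eq [PseudoMetricSpace X] [BoundedSpace X] {δ : ℝ}
    (hφ : ∀ i, Metric.diam (φ ⁻¹' {i}) ≤ δ) {y z : X} (h : itinerary T φ l y = itinerary T φ l z)
    {n : ℕ} (hn : n < l) : dist (T^[n] y) (T^[n] z) ≤ δ :=
  (Metric.dist_le_diam_of_mem (s := φ ⁻¹' {φ (T^[n] z)}) (Bornology.IsBounded.all _)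
    (congrFun h ⟨n, hn⟩) rfl).trans (hφ _)

end Itinerary

section BirkhoffSum

variable {X : Type*} {T : X → X} {g : X → ℝ}

theorem abs_birkhoffSum_sub_le {n : ℕ} {y z : X} {η : ℝ}
    (h : ∀ k < n, |g (T^[k] y) - g (T^[k] z)| ≤ η) :
    |birkhoffSum T g n y - birkhoffSum T g n z| ≤ n * η := by
  rw [birkhoffSum, birkhoffSum, ← Finset.sum_sub_distrib]
  calc _ ≤ ∑ k ∈ Finset.range n, |g (T^[k] y) - g (T^[k] z)| := Finset.abs_sum_le_sum_abs _ _
    _ ≤ (Finset.range n).card • η :=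
      Finset.sum_le_card_nsmul _ _ η fun k hk => h k (Finset.mem_range.mp hk)
    _ = n * η := by rw [Finset.card_range, nsmul_eq_mul]

theorem abs_birkhoffSum_le {B : ℝ} (hB : ∀ y, |g y| ≤ B) (n : ℕ) (y : X) :
    |birkhoffSum T g n y| ≤ n * B := by
  calc _ ≤ ∑ k ∈ Finset.range n, |g (T^[k] y)| := Finset.abs_sum_le_sum_abs _ _
    _ ≤ (Finset.range n).card • B := Finset.sum_le_card_nsmul _ _ B fun k _ => hB _
    _ = n * B := by rw [Finset.card_range, nsmul_eq_mul]

variable [MeasurableSpace X] {μ : Measure X}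

theorem MeasureTheory.MeasurePreserving.integrable_birkhoffSum (hT : MeasurePreserving T μ μ)
    (hg : Integrable g μ) (n : ℕ) : Integrable (birkhoffSum T g n) μ := by
  unfold birkhoffSum
  exact integrable_finsetSum _ fun k _ => (hT.iterate k).integrable_comp_of_integrable hg

theorem MeasureTheory.MeasurePreserving.integral_birkhoffSum (hT : MeasurePreserving T μ μ)
    (hg : Integrable g μ) (n : ℕ) : ∫ y, birkhoffSum T g n y ∂μ = n * ∫ y, g y ∂μ := by
  have hcomp : ∀ k, ∫ y, g (T^[k] y) ∂μ = ∫ y, g y ∂μ := fun k => by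
    have h := integral_map (hT.iterate k).measurable.aemeasurable
      ((hT.iterate k).map_eq.symm ▸ hg.aestronglyMeasurable)
    rwa [(hT.iterate k).map_eq, eq_comm] at h
  simp only [birkhoffSum]
  rw [integral_finsetSum (f := fun k y => g (T^[k] y)) _
    fun k _ => (hT.iterate k).integrable_comp_of_integrable hg]
  simp only [hcomp, Finset.sum_const, Finset.card_range, nsmul_eq_mul]

end BirkhoffSum

theorem abs_sum_birkhoffSum_div_sub_integral_le {X ι α : Type*} [PseudoMetricSpace X]
    [BoundedSpace X] [MeasurableSpace X] [Fintype ι] {μ : Measure X} [IsProbabilityMeasure μ]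
    {T : X → X} (hT : MeasurePreserving T μ μ) {φ : X → ι} (hφ : ∀ i, MeasurableSet (φ ⁻¹' {i}))
    {δ : ℝ} (hdiam : ∀ i, Metric.diam (φ ⁻¹' {i}) ≤ δ) {g : X → ℝ} (hg : Integrable g μ)
    {η B : ℝ} (hη : ∀ a b, dist a b ≤ δ → |g a - g b| ≤ η) (hB : ∀ y, |g y| ≤ B)
    {l : ℕ} (hl : 0 < l) (s : Finset α) (x : α → X) {θ : ℝ}
    (hfreq : ∀ w, (itinerary T φ l ⁻¹' {w}).Nonempty →
      |((s.filter fun i => itinerary T φ l (x i) = w).card / s.card : ℝ)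
        - μ.real (itinerary T φ l ⁻¹' {w})| ≤ θ) :
    |(∑ i ∈ s, birkhoffSum T g l (x i)) / (s.card * l) - ∫ y, g y ∂μ|
      ≤ 2 * η + (Finset.univ.filter fun w => (itinerary T φ l ⁻¹' {w}).Nonempty).card
        * (θ * B) := by
  have h := abs_average_sub_integral_le_of_frequency μ s x
    (measurableSet_itinerary_preimage hT.measurable hφ) hfreq (hT.integrable_birkhoffSum hg l)
    (fun y z h => abs_birkhoffSum_sub_le fun k hk =>
      hη _ _ (dist_iterate_le_of_itinerary_eq hdiam h hk))
    (abs_birkhoffSum_le hB l)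
  rw [hT.integral_birkhoffSum hg] at h
  have hl' : (0 : ℝ) < l := Nat.cast_pos.mpr hl
  rw [show ∀ S : ℝ, S / (s.card * l) - ∫ y, g y ∂μ = (S / s.card - l * ∫ y, g y ∂μ) / l by
    intro S; field_simp, abs_div, abs_of_pos hl', div_le_iff₀ hl']
  linarith

theorem stmt9 {X : Type*} [MetricSpace X] [CompactSpace X] [MeasurableSpace X] [BorelSpace X]
    (T : X → X) (hTc : Continuous T)
    (μ : Measure X) [IsProbabilityMeasure μ] (hinv : μ.map T = μ)
    (f : C(X, ℝ)) (ε : ℝ) (hε : 0 < ε) :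
    ∃ δ > 0, ∀ (ι : Type) [Fintype ι] (φ : X → ι),
      (∀ i : ι, MeasurableSet (φ ⁻¹' {i})) →
      (∀ i : ι, Metric.diam (φ ⁻¹' {i}) ≤ δ) →
      ∀ (l N₁ : ℕ), 1 ≤ l → 1 ≤ N₁ →
      ∀ (x : ℕ → X) (a : ℕ → ℕ),
      (∀ N, 1 ≤ N → N < N₁ → a N + l ≤ a (N + 1)) →
      (∀ w : Fin l → ι,
        (Set.Nonempty {y : X | ∀ m : Fin l, φ (T^[(m : ℕ)] y) = w m}) →
        |(((Finset.Icc 1 N₁).filter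
              (fun N => ∀ m : Fin l, φ (T^[(m : ℕ)] (x N)) = w m)).card : ℝ) / (N₁ : ℝ)
          - (μ {y : X | ∀ m : Fin l, φ (T^[(m : ℕ)] y) = w m}).toReal|
          < δ / (((Finset.univ : Finset (Fin l → ι)).filter
              (fun w' => Set.Nonempty {y : X | ∀ m : Fin l, φ (T^[(m : ℕ)] y) = w' m})).card : ℝ)) →
      |(∑ N ∈ Finset.Icc 1 N₁, ∑ n ∈ Finset.range l, f (T^[n] (x N))) / ((N₁ : ℝ) * (l : ℝ))
        - ∫ y, f y ∂μ| < ε := by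
  obtain ⟨δ₀, hδ₀, hf⟩ := Metric.uniformContinuous_iff.mp
    (CompactSpace.uniformContinuous_of_continuous f.continuous) (ε / 4) (by positivity)
  set δ := min (δ₀ / 2) (ε / (4 * (‖f‖ + 1)))
  have hδf : δ * ‖f‖ ≤ ε / 4 := calc
    δ * ‖f‖ ≤ ε / (4 * (‖f‖ + 1)) * (‖f‖ + 1) := by gcongr <;> simp [δ]
    _ = ε / 4 := by field_simp
  refine ⟨δ, by positivity, fun ι _ φ hφ hdiam l N₁ hl hN₁ x _ _ hfreq => ?_⟩
  set K : ℝ := ((Finset.univ.filter fun w => (itinerary T φ l ⁻¹' {w}).Nonempty).card : ℝ)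
  have hK : 0 < K := Nat.cast_pos.mpr <| Finset.card_pos.mpr
    ⟨itinerary T φ l (x 1), Finset.mem_filter.mpr ⟨Finset.mem_univ _, x 1, rfl⟩⟩
  have hcard : ((Finset.Icc 1 N₁).card : ℝ) = N₁ := by simp
  have h := abs_sum_birkhoffSum_div_sub_integral_le ⟨hTc.measurable, hinv⟩ hφ hdiam
    (f.continuous.integrable_of_hasCompactSupport (HasCompactSupport.of_compactSpace f))
    (fun a b hab => (hf (hab.trans_lt ((min_le_left _ _).trans_lt (half_lt_self hδ₀)))).le)
    f.norm_coe_le_norm hl (Finset.Icc 1 N₁) x (θ := δ / K) fun w hw => by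
      simp only [K, itinerary_preimage_singleton, itinerary_eq_iff, hcard, measureReal_def] at hw ⊢
      exact (hfreq w hw).le
  rw [hcard, show K * (δ / K * ‖f‖) = δ * ‖f‖ by field_simp] at h
  exact h.trans_lt (by linarith)
end
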